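/- Let I, J, K be three subsets of {1,...,n} with I ∩ J = ∅ and K = I^c ∩ J^c = (I ∪ J)^c, so |I| + |J| + |K| = n. Then for the operator L̃₂ acting on the pure-spinor basis: (i) if |K| ∉ {0, 2} then L̃₂(e_I·v_I, e_J·v_I) · e_K·v_I = 0; (ii) if |K| = 0 then L̃₂(e_I·v_I, e_J·v_I) · e_K·v_I = B(e_I·v_I, e_J·v_I)(|I| − n/2) v_I; (iii) if K = {a, b} (ordered b then a) then L̃₂(e_I·v_I, e_J·v_I) · e_K·v_I = 2 B(e_a e_b e_I·v_I, e_J·v_I) v_I. -/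

import Mathlib

open CliffordAlgebra Finset

/-!
Through `ρ`, the operators `e a = ρ e_a` and `i a = ρ i_a` obey the canonical anticommutation
relations, `v₀` is a vacuum for the `i a`, and `B` is invariant under both. Moving the `e`'s of
`e_L v₀` across `B` gives `B (e_L v₀) (e_M v₀) = B v₀ (e_{rev L} e_M v₀)`, which vanishes as soon
as an index is repeated (`e_a² = 0`) or missing: if `i_m` kills `z` then `z = i_m e_m z` and `i_m`
moves onto `v₀`. For disjoint `I`, `J` every `q` lies outside `I` or outside `J`, so `i_q`
kills `e_I v₀` or `e_J v₀`, and the `i i` and `e i` coefficients of `L̃₂` vanish; the `e_p e_q`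
coefficient survives only for `{p, q} = K`, and the diagonal ones are `±B(e_I v₀, e_J v₀)`,
which vanishes unless `K = ∅`.
-/

/-- The ordered product `e_{p₁} ⋯ e_{p_k}` in the Clifford algebra, for a
subset `P = {p₁ < ⋯ < p_k}` of `{1, …, n}`. -/
def prodE {k V : Type*} [Field k] [AddCommGroup V] [Module k V] {n : ℕ}
    (Q : QuadraticForm k V) (eB : Fin n → V) (P : Finset (Fin n)) :
    CliffordAlgebra Q :=
  ((P.sort (· ≤ ·)).map fun p => ι Q (eB p)).prod

theorem sum_ite_mem_one_neg_one {α R : Type*} [Fintype α] [DecidableEq α] [CommRing R]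
    (I : Finset α) :
    ∑ a, (if a ∈ I then (1 : R) else -1) = 2 * I.card - Fintype.card α := by
  simp only [sum_ite, sum_const, nsmul_eq_mul, mul_one, mul_neg, filter_mem_eq_inter,
    univ_inter, filter_not, ← compl_eq_univ_sdiff, card_compl]
  push_cast [card_le_univ]
  ring

theorem card_add_card_add_card_compl {α : Type*} [Fintype α] [DecidableEq α] {I J : Finset α}
    (hIJ : Disjoint I J) : I.card + J.card + (I ∪ J)ᶜ.card = Fintype.card α := by
  rw [← card_union_of_disjoint hIJ, card_add_card_compl]

section Fock

variable {k S α : Type*} [CommRing k] [AddCommGroup S] [Module k S]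

/-- Canonical anticommutation relations. -/
structure IsCAR [DecidableEq α] (e i : α → Module.End k S) : Prop where
  e_mul_e : ∀ a b, e a * e b = -(e b * e a)
  e_mul_self : ∀ a, e a * e a = 0
  i_mul_i : ∀ a b, i a * i b = -(i b * i a)
  i_mul_e : ∀ a b, i a * e b = (if a = b then 1 else 0) - e b * i a

theorem B_prod_apply {e : α → Module.End k S} {B : S →ₗ[k] S →ₗ[k] k}
    (he : ∀ a x y, B (e a x) y = B x (e a y))
    (L : List α) (x y : S) : B ((L.map e).prod x) y = B x ((L.reverse.map e).prod y) := by
  induction L generalizing y with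
  | nil => simp
  | cons a L ih => simp [Module.End.mul_apply, he, ih]

def eProd [LinearOrder α] (e : α → Module.End k S) (I : Finset α) : Module.End k S :=
  ((I.sort (· ≤ ·)).map e).prod

@[simp]
theorem eProd_empty [LinearOrder α] (e : α → Module.End k S) : eProd e ∅ = 1 := by
  simp [eProd]

namespace IsCAR

variable {e i : α → Module.End k S} {v₀ : S} {B : S →ₗ[k] S →ₗ[k] k}

section DecidableEq

variable [DecidableEq α]

theorem i_e_apply_self (h : IsCAR e i) (a : α) (x : S) : i a (e a x) = x - e a (i a x) := by
  simpa using congrArg (· x) (h.i_mul_e a a)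

theorem i_e_apply_of_ne (h : IsCAR e i) {a b : α} (hab : a ≠ b) (x : S) :
    i a (e b x) = -e b (i a x) := by
  simpa [hab] using congrArg (· x) (h.i_mul_e a b)

theorem e_mul_prod_eq_zero (h : IsCAR e i) {a : α} {L : List α} (ha : a ∈ L) :
    e a * (L.map e).prod = 0 := by
  induction L with
  | nil => simp at ha
  | cons b L ih =>
    rw [List.map_cons, List.prod_cons, ← mul_assoc]
    obtain rfl | hab := eq_or_ne a b
    · rw [h.e_mul_self, zero_mul]
    · rw [h.e_mul_e, neg_mul, mul_assoc, ih (by simpa [hab] using ha), mul_zero, neg_zero]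

theorem prod_eq_zero_of_not_nodup (h : IsCAR e i) {L : List α} (hL : ¬L.Nodup) :
    (L.map e).prod = 0 := by
  induction L with
  | nil => simp at hL
  | cons b L ih =>
    rw [List.map_cons, List.prod_cons]
    by_cases hb : b ∈ L
    · exact h.e_mul_prod_eq_zero hb
    · rw [ih (by simpa [hb] using hL), mul_zero]

theorem i_prod_apply_eq_zero (h : IsCAR e i) {a : α} {L : List α} (ha : a ∉ L) {x : S}
    (hx : i a x = 0) : i a ((L.map e).prod x) = 0 := by
  induction L with
  | nil => simpa using hx
  | cons b L ih =>
    simp only [List.mem_cons, not_or] at ha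
    rw [List.map_cons, List.prod_cons, Module.End.mul_apply, h.i_e_apply_of_ne ha.1, ih ha.2,
      map_zero, neg_zero]

theorem B_eq_zero_of_i_apply_eq_zero (h : IsCAR e i)
    (hi : ∀ a x y, B (i a x) y = B x (i a y)) {z : S} {m : α} (hv : i m v₀ = 0)
    (hz : i m z = 0) : B v₀ z = 0 := by
  have hz' : z = i m (e m z) := by rw [h.i_e_apply_self, hz, map_zero, sub_zero]
  rw [hz', ← hi, hv, map_zero, LinearMap.zero_apply]

theorem B_prod_apply_eq_zero_of_notMem (h : IsCAR e i)
    (he : ∀ a x y, B (e a x) y = B x (e a y)) (hi : ∀ a x y, B (i a x) y = B x (i a y))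
    (hv : ∀ a, i a v₀ = 0) {m : α} {L M : List α} (hL : m ∉ L) (hM : m ∉ M) :
    B ((L.map e).prod v₀) ((M.map e).prod v₀) = 0 := by
  rw [B_prod_apply he]
  exact h.B_eq_zero_of_i_apply_eq_zero hi (hv m)
    (h.i_prod_apply_eq_zero (by simpa using hL) (h.i_prod_apply_eq_zero hM (hv m)))

theorem B_prod_apply_eq_zero_of_not_nodup (h : IsCAR e i)
    (he : ∀ a x y, B (e a x) y = B x (e a y)) {L M : List α} (hLM : ¬(L ++ M).Nodup) :
    B ((L.map e).prod v₀) ((M.map e).prod v₀) = 0 := by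
  have hdup : ¬(L.reverse ++ M).Nodup := by
    rwa [((List.reverse_perm L).append_right M).nodup_iff]
  rw [B_prod_apply he, ← Module.End.mul_apply, ← List.prod_append, ← List.map_append,
    h.prod_eq_zero_of_not_nodup hdup, LinearMap.zero_apply, map_zero]

theorem B_i_mul_i_apply_eq_zero (h : IsCAR e i) (hi : ∀ a x y, B (i a x) y = B x (i a y))
    {p q : α} {φ χ : S} (hq : i q φ = 0 ∨ i q χ = 0) : B ((i p * i q) φ) χ = 0 := by
  rcases hq with hq | hq
  · rw [Module.End.mul_apply, hq, map_zero, map_zero, LinearMap.zero_apply]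
  · rw [Module.End.mul_apply, hi, hi, ← Module.End.mul_apply, h.i_mul_i, LinearMap.neg_apply,
      Module.End.mul_apply, hq, map_zero, neg_zero, map_zero]

theorem B_e_mul_i_apply_eq_zero (h : IsCAR e i) (he : ∀ a x y, B (e a x) y = B x (e a y))
    (hi : ∀ a x y, B (i a x) y = B x (i a y)) {p q : α} (hpq : p ≠ q) {φ χ : S}
    (hq : i q φ = 0 ∨ i q χ = 0) : B ((e p * i q) φ) χ = 0 := by
  rcases hq with hq | hq
  · rw [Module.End.mul_apply, hq, map_zero, map_zero, LinearMap.zero_apply]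
  · rw [Module.End.mul_apply, he, hi, h.i_e_apply_of_ne hpq.symm, hq, map_zero, neg_zero, map_zero]

theorem e_mul_i_sub_apply_of_e_apply_eq_zero (h : IsCAR e i) {a : α} {φ : S}
    (ha : e a φ = 0) : (e a * i a - i a * e a) φ = φ := by
  have hφ := h.i_e_apply_self a φ
  rw [ha, map_zero, eq_comm, sub_eq_zero] at hφ
  rw [LinearMap.sub_apply, Module.End.mul_apply, Module.End.mul_apply, ha, map_zero, sub_zero]
  exact hφ.symm

theorem i_mul_e_sub_apply_of_i_apply_eq_zero (h : IsCAR e i) {a : α} {φ : S}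
    (ha : i a φ = 0) : (i a * e a - e a * i a) φ = φ := by
  rw [LinearMap.sub_apply, Module.End.mul_apply, Module.End.mul_apply, h.i_e_apply_self, ha,
    map_zero, sub_zero, sub_zero]

theorem i_mul_i_e_mul_e_apply (h : IsCAR e i) {a b : α} (hab : a ≠ b) {v : S}
    (ha : i a v = 0) (hb : i b v = 0) : (i a * i b) ((e b * e a) v) = v := by
  simp only [Module.End.mul_apply]
  rw [h.i_e_apply_self, h.i_e_apply_of_ne hab.symm, hb, map_zero, neg_zero, map_zero, sub_zero,
    h.i_e_apply_self, ha, map_zero, sub_zero]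

end DecidableEq

section LinearOrder

variable [LinearOrder α]

theorem i_eProd_apply_of_notMem (h : IsCAR e i) (hv : ∀ a, i a v₀ = 0) {I : Finset α} {a : α}
    (ha : a ∉ I) : i a (eProd e I v₀) = 0 :=
  h.i_prod_apply_eq_zero (by simpa using ha) (hv a)

theorem e_eProd_apply_of_mem (h : IsCAR e i) {I : Finset α} {a : α} (ha : a ∈ I) :
    e a (eProd e I v₀) = 0 := by
  rw [eProd, ← Module.End.mul_apply, h.e_mul_prod_eq_zero (by simpa using ha),
    LinearMap.zero_apply]

theorem B_eProd_eq_zero [Fintype α] (h : IsCAR e i) (he : ∀ a x y, B (e a x) y = B x (e a y))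
    (hi : ∀ a x y, B (i a x) y = B x (i a y)) (hv : ∀ a, i a v₀ = 0) {I J : Finset α}
    (hK : (I ∪ J)ᶜ.Nonempty) : B (eProd e I v₀) (eProd e J v₀) = 0 := by
  obtain ⟨m, hm⟩ := hK
  simp only [mem_compl, mem_union, not_or] at hm
  exact h.B_prod_apply_eq_zero_of_notMem he hi hv (m := m) (by simpa using hm.1)
    (by simpa using hm.2)

theorem B_e_mul_e_eProd_eq_zero [Fintype α] (h : IsCAR e i)
    (he : ∀ a x y, B (e a x) y = B x (e a y))
    (hi : ∀ a x y, B (i a x) y = B x (i a y)) (hv : ∀ a, i a v₀ = 0) {I J : Finset α}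
    {p q : α} (hpq : {p, q} ≠ (I ∪ J)ᶜ) :
    B ((e p * e q) (eProd e I v₀)) (eProd e J v₀) = 0 := by
  have hprod : (e p * e q) (eProd e I v₀) = ((p :: q :: I.sort (· ≤ ·)).map e).prod v₀ := by
    simp [eProd]
  rw [hprod, eProd]
  by_cases hK : (I ∪ J)ᶜ ⊆ {p, q}
  · obtain ⟨x, hx, hxK⟩ : ∃ x ∈ ({p, q} : Finset α), x ∉ (I ∪ J)ᶜ := by
      by_contra! hsub
      exact hpq (Subset.antisymm hsub hK)
    apply h.B_prod_apply_eq_zero_of_not_nodup he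
    simp only [mem_insert, mem_singleton, mem_compl, not_not, mem_union] at hx hxK
    rcases hx with rfl | rfl <;> simp [List.nodup_cons] <;> tauto
  · obtain ⟨m, hmK, hm⟩ := not_subset.mp hK
    simp only [mem_insert, mem_singleton, not_or, mem_compl, mem_union] at hmK hm
    exact h.B_prod_apply_eq_zero_of_notMem he hi hv (m := m)
      (by simp [hm.1, hm.2, hmK.1]) (by simpa using hmK.2)

theorem B_e_mul_i_sub_eProd (h : IsCAR e i) (hv : ∀ a, i a v₀ = 0) (I J : Finset α) (a : α) :
    B ((e a * i a - i a * e a) (eProd e I v₀)) (eProd e J v₀) =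
      (if a ∈ I then 1 else -1) * B (eProd e I v₀) (eProd e J v₀) := by
  split_ifs with ha
  · rw [h.e_mul_i_sub_apply_of_e_apply_eq_zero (h.e_eProd_apply_of_mem ha), one_mul]
  · rw [← neg_sub, LinearMap.neg_apply,
      h.i_mul_e_sub_apply_of_i_apply_eq_zero (h.i_eProd_apply_of_notMem hv ha), map_neg,
      LinearMap.neg_apply, neg_one_mul]

end LinearOrder

end IsCAR

end Fock

section L₂

variable {k S α : Type*} [Field k] [AddCommGroup S] [Module k S] [Fintype α]

/-- `ρ (L̃₂(ψ₁, ψ₂))`, written with `e a = ρ e_a` and `i a = ρ i_a`. -/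
def L₂ [DecidableEq α] (e i : α → Module.End k S) (B : S →ₗ[k] S →ₗ[k] k) (ψ₁ ψ₂ : S) :
    Module.End k S :=
  (∑ p ∈ univ.filter (fun p : α × α => p.1 ≠ p.2),
      B ((e p.1 * e p.2) ψ₁) ψ₂ • (i p.1 * i p.2))
    + (∑ p ∈ univ.filter (fun p : α × α => p.1 ≠ p.2),
      B ((i p.1 * i p.2) ψ₁) ψ₂ • (e p.1 * e p.2))
    + (∑ p ∈ univ.filter (fun p : α × α => p.1 ≠ p.2),
      B ((e p.1 * i p.2) ψ₁) ψ₂ • (i p.1 * e p.2 - e p.2 * i p.1))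
    + (2 : k)⁻¹ • ∑ a, B ((e a * i a - i a * e a) ψ₁) ψ₂ • (i a * e a - e a * i a)

variable [LinearOrder α] {e i : α → Module.End k S} {v₀ : S} {B : S →ₗ[k] S →ₗ[k] k}

namespace IsCAR

theorem L₂_eProd_of_disjoint (h : IsCAR e i) (he : ∀ a x y, B (e a x) y = B x (e a y))
    (hi : ∀ a x y, B (i a x) y = B x (i a y)) (hv : ∀ a, i a v₀ = 0) {I J : Finset α}
    (hIJ : Disjoint I J) :
    L₂ e i B (eProd e I v₀) (eProd e J v₀) =
      (∑ p ∈ univ.filter (fun p : α × α => p.1 ≠ p.2),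
        B ((e p.1 * e p.2) (eProd e I v₀)) (eProd e J v₀) • (i p.1 * i p.2))
      + (2 : k)⁻¹ •
        ∑ a, ((if a ∈ I then 1 else -1) * B (eProd e I v₀) (eProd e J v₀)) •
          (i a * e a - e a * i a) := by
  have hnot (q : α) : i q (eProd e I v₀) = 0 ∨ i q (eProd e J v₀) = 0 := by
    by_cases hq : q ∈ I
    · exact .inr (h.i_eProd_apply_of_notMem hv (disjoint_left.mp hIJ hq))
    · exact .inl (h.i_eProd_apply_of_notMem hv hq)
  have hii : ∑ p ∈ univ.filter (fun p : α × α => p.1 ≠ p.2),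
      B ((i p.1 * i p.2) (eProd e I v₀)) (eProd e J v₀) • (e p.1 * e p.2) = 0 :=
    sum_eq_zero fun p _ => by rw [h.B_i_mul_i_apply_eq_zero hi (hnot p.2), zero_smul]
  have hei : ∑ p ∈ univ.filter (fun p : α × α => p.1 ≠ p.2),
      B ((e p.1 * i p.2) (eProd e I v₀)) (eProd e J v₀) •
        (i p.1 * e p.2 - e p.2 * i p.1) = 0 :=
    sum_eq_zero fun p hp => by
      rw [h.B_e_mul_i_apply_eq_zero he hi (mem_filter.mp hp).2 (hnot p.2), zero_smul]
  rw [L₂, hii, hei, add_zero, add_zero]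
  simp_rw [h.B_e_mul_i_sub_eProd hv]

theorem L₂_eProd_eq_zero (h : IsCAR e i) (he : ∀ a x y, B (e a x) y = B x (e a y))
    (hi : ∀ a x y, B (i a x) y = B x (i a y)) (hv : ∀ a, i a v₀ = 0) {I J : Finset α}
    (hIJ : Disjoint I J) (hK₀ : (I ∪ J)ᶜ.card ≠ 0) (hK₂ : (I ∪ J)ᶜ.card ≠ 2) :
    L₂ e i B (eProd e I v₀) (eProd e J v₀) = 0 := by
  rw [h.L₂_eProd_of_disjoint he hi hv hIJ, h.B_eProd_eq_zero he hi hv (card_ne_zero.mp hK₀)]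
  simp only [mul_zero, zero_smul, sum_const_zero, smul_zero, add_zero]
  refine sum_eq_zero fun p hp => ?_
  rw [h.B_e_mul_e_eProd_eq_zero he hi hv fun hK => hK₂ ?_, zero_smul]
  rw [← hK, card_pair (mem_filter.mp hp).2]

theorem L₂_eProd_apply_of_compl_eq_empty (h2 : (2 : k) ≠ 0) (h : IsCAR e i)
    (he : ∀ a x y, B (e a x) y = B x (e a y)) (hi : ∀ a x y, B (i a x) y = B x (i a y))
    (hv : ∀ a, i a v₀ = 0) {I J : Finset α} (hIJ : Disjoint I J) (hK : (I ∪ J)ᶜ = ∅) :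
    L₂ e i B (eProd e I v₀) (eProd e J v₀) v₀ =
      (B (eProd e I v₀) (eProd e J v₀) * ((I.card : k) - Fintype.card α / 2)) • v₀ := by
  rw [h.L₂_eProd_of_disjoint he hi hv hIJ, sum_eq_zero fun p _ =>
    by rw [h.B_e_mul_e_eProd_eq_zero he hi hv (hK ▸ insert_ne_empty _ _), zero_smul], zero_add]
  simp only [LinearMap.smul_apply, LinearMap.sum_apply,
    h.i_mul_e_sub_apply_of_i_apply_eq_zero (hv _)]
  rw [← sum_smul, smul_smul, ← sum_mul, sum_ite_mem_one_neg_one]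
  congr 1
  field_simp

theorem L₂_eProd_apply_of_compl_eq_pair (h : IsCAR e i)
    (he : ∀ a x y, B (e a x) y = B x (e a y)) (hi : ∀ a x y, B (i a x) y = B x (i a y))
    (hv : ∀ a, i a v₀ = 0) {I J : Finset α} (hIJ : Disjoint I J) {a b : α} (hab : a ≠ b)
    (hK : (I ∪ J)ᶜ = {a, b}) :
    L₂ e i B (eProd e I v₀) (eProd e J v₀) ((e b * e a) v₀) =
      (2 * B ((e a * e b) (eProd e I v₀)) (eProd e J v₀)) • v₀ := by
  have hpairs : ∑ p ∈ univ.filter (fun p : α × α => p.1 ≠ p.2),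
      B ((e p.1 * e p.2) (eProd e I v₀)) (eProd e J v₀) • (i p.1 * i p.2) =
      ∑ p ∈ {(a, b), (b, a)},
        B ((e p.1 * e p.2) (eProd e I v₀)) (eProd e J v₀) • (i p.1 * i p.2) := by
    refine (sum_subset (by simp [insert_subset_iff, hab, hab.symm]) fun p hp hpab => ?_).symm
    rw [h.B_e_mul_e_eProd_eq_zero he hi hv ?_, zero_smul]
    rw [hK, Ne, ← coe_inj]
    push_cast
    rw [Set.pair_eq_pair_iff]
    rintro (⟨h₁, h₂⟩ | ⟨h₁, h₂⟩) <;> simp [Prod.ext_iff, h₁, h₂] at hpab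
  rw [h.L₂_eProd_of_disjoint he hi hv hIJ,
    h.B_eProd_eq_zero he hi hv (hK ▸ insert_nonempty _ _)]
  simp only [mul_zero, zero_smul, sum_const_zero, smul_zero, add_zero]
  have hba : B ((e b * e a) (eProd e I v₀)) (eProd e J v₀) =
      -B ((e a * e b) (eProd e I v₀)) (eProd e J v₀) := by
    rw [h.e_mul_e, LinearMap.neg_apply, map_neg, LinearMap.neg_apply]
  rw [hpairs, sum_pair (by simp [hab]), hba, h.i_mul_i b a]
  simp only [LinearMap.add_apply, LinearMap.smul_apply, LinearMap.neg_apply,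
    h.i_mul_i_e_mul_e_apply hab (hv a) (hv b)]
  rw [neg_smul, smul_neg, neg_neg, ← add_smul, two_mul]

end IsCAR

end L₂

theorem isCAR_of_polar {k V S α : Type*} [CommRing k] [AddCommGroup V] [Module k V]
    [AddCommGroup S] [Module k S] [DecidableEq α] {Q : QuadraticForm k V} {F : Type*}
    [FunLike F (CliffordAlgebra Q) (Module.End k S)]
    [AlgHomClass F k (CliffordAlgebra Q) (Module.End k S)] (ρ : F) {e i : α → V}
    (hee : ∀ a b, QuadraticMap.polar Q (e a) (e b) = 0) (hQe : ∀ a, Q (e a) = 0)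
    (hii : ∀ a b, QuadraticMap.polar Q (i a) (i b) = 0)
    (hie : ∀ a b, QuadraticMap.polar Q (i a) (e b) = if a = b then 1 else 0) :
    IsCAR (fun a => ρ (ι Q (e a))) (fun a => ρ (ι Q (i a))) where
  e_mul_e a b := by
    rw [← map_mul ρ, ← map_mul ρ, ι_mul_ι_comm, hee, map_zero, zero_sub, map_neg]
  e_mul_self a := by rw [← map_mul ρ, ι_sq_scalar, hQe, map_zero, map_zero]
  i_mul_i a b := by
    rw [← map_mul ρ, ← map_mul ρ, ι_mul_ι_comm, hii, map_zero, zero_sub, map_neg]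
  i_mul_e a b := by
    rw [← map_mul ρ, ← map_mul ρ, ι_mul_ι_comm, hie, map_sub, AlgHomClass.commutes]
    split_ifs <;> simp

theorem map_prodE {k V S : Type*} [Field k] [AddCommGroup V] [Module k V] [AddCommGroup S]
    [Module k S] {n : ℕ} {Q : QuadraticForm k V} {F : Type*}
    [FunLike F (CliffordAlgebra Q) (Module.End k S)]
    [AlgHomClass F k (CliffordAlgebra Q) (Module.End k S)] (ρ : F) (eB : Fin n → V)
    (P : Finset (Fin n)) : ρ (prodE Q eB P) = eProd (fun a => ρ (ι Q (eB a))) P := by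
  simp [prodE, eProd, map_list_prod, List.map_map, Function.comp_def]

theorem stmt16_general {k V S : Type*} [Field k] [AddCommGroup V] [Module k V]
    [AddCommGroup S] [Module k S]
    (n : ℕ)
    (g : LinearMap.BilinForm k V) (Q : QuadraticForm k V)
    (h2 : (2 : k) ≠ 0)
    (hsymm : ∀ v w, g v w = g w v)
    (hQ : ∀ v, Q v = g v v)
    -- a polarisation with dual bases
    (iB eB : Fin n → V)
    (hii : ∀ a b, g (iB a) (iB b) = 0)
    (hee : ∀ a b, g (eB a) (eB b) = 0)
    (hei : ∀ a b, g (eB a) (iB b) = if a = b then (2 : k)⁻¹ else 0)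
    -- the spinor representation
    (ρ : CliffordAlgebra Q ≃ₐ[k] Module.End k S)
    -- a pure spinor annihilated by `I`
    (v0 : S)
    (hv0 : ∀ a, ρ (ι Q (iB a)) v0 = 0)
    -- a nonzero spinor norm
    (B : S →ₗ[k] S →ₗ[k] k)
    (hB : ∀ (v : V) (φ ψ : S), B (ρ (ι Q v) φ) ψ = B φ (ρ (ι Q v) ψ)) :
    -- the operator `L̃₂` in isotropic coordinates
    letI L : S → S → CliffordAlgebra Q := fun ψ1 ψ2 =>
      (∑ p ∈ Finset.univ.filter (fun p : Fin n × Fin n => p.1 ≠ p.2),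
        (B (ρ (ι Q (eB p.1) * ι Q (eB p.2)) ψ1) ψ2) • (ι Q (iB p.1) * ι Q (iB p.2)))
      + (∑ p ∈ Finset.univ.filter (fun p : Fin n × Fin n => p.1 ≠ p.2),
        (B (ρ (ι Q (iB p.1) * ι Q (iB p.2)) ψ1) ψ2) • (ι Q (eB p.1) * ι Q (eB p.2)))
      + (∑ p ∈ Finset.univ.filter (fun p : Fin n × Fin n => p.1 ≠ p.2),
        (B (ρ (ι Q (eB p.1) * ι Q (iB p.2)) ψ1) ψ2) •
          (ι Q (iB p.1) * ι Q (eB p.2) - ι Q (eB p.2) * ι Q (iB p.1)))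
      + (2 : k)⁻¹ • ∑ a : Fin n,
        (B (ρ (ι Q (eB a) * ι Q (iB a) - ι Q (iB a) * ι Q (eB a)) ψ1) ψ2) •
          (ι Q (iB a) * ι Q (eB a) - ι Q (eB a) * ι Q (iB a))
    ∀ I J K : Finset (Fin n), Disjoint I J → K = (I ∪ J)ᶜ →
      (I.card + J.card + K.card = n) ∧
      (K.card ≠ 0 → K.card ≠ 2 →
        ρ (L (ρ (prodE Q eB I) v0) (ρ (prodE Q eB J) v0)) (ρ (prodE Q eB K) v0) = 0) ∧
      (K = ∅ →
        ρ (L (ρ (prodE Q eB I) v0) (ρ (prodE Q eB J) v0)) (ρ (prodE Q eB K) v0) =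
          (B (ρ (prodE Q eB I) v0) (ρ (prodE Q eB J) v0) *
            ((I.card : k) - (n : k) / 2)) • v0) ∧
      (∀ a b : Fin n, a ≠ b → K = {a, b} →
        ρ (L (ρ (prodE Q eB I) v0) (ρ (prodE Q eB J) v0))
            (ρ (ι Q (eB b) * ι Q (eB a)) v0) =
          (2 * B (ρ (ι Q (eB a) * ι Q (eB b) * prodE Q eB I) v0)
            (ρ (prodE Q eB J) v0)) • v0) := by
  have hpolar (v w : V) : QuadraticMap.polar Q v w = 2 * g v w := by
    simp only [QuadraticMap.polar, hQ, map_add, LinearMap.add_apply, hsymm w v]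
    ring
  have hCAR : IsCAR (fun a => ρ (ι Q (eB a))) (fun a => ρ (ι Q (iB a))) :=
    isCAR_of_polar ρ (by simp [hpolar, hee]) (by simp [hQ, hee]) (by simp [hpolar, hii])
      fun a b => by rw [hpolar, hsymm, hei]; split_ifs <;> simp_all [eq_comm]
  have he (a : Fin n) := hB (eB a)
  have hi (a : Fin n) := hB (iB a)
  intro I J K hIJ hK
  subst hK
  -- once `ρ` is pushed inside, `L` is `L₂` of the operators `ρ e_a`, `ρ i_a` by unfolding
  simp only [map_add, map_sum, map_smul, map_mul, map_sub, map_prodE]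
  refine ⟨by simpa using card_add_card_add_card_compl hIJ, fun hK₀ hK₂ => ?_, fun hK => ?_,
    fun a b hab hK => ?_⟩
  · have := hCAR.L₂_eProd_eq_zero he hi hv0 hIJ hK₀ hK₂
    exact (LinearMap.congr_fun this _).trans (LinearMap.zero_apply _)
  · have := hCAR.L₂_eProd_apply_of_compl_eq_empty h2 he hi hv0 hIJ hK
    rw [Fintype.card_fin] at this
    rw [hK, eProd_empty, Module.End.one_apply]
    exact this
  · exact hCAR.L₂_eProd_apply_of_compl_eq_pair he hi hv0 hIJ hab hK

theorem stmt16 {k V S : Type*} [Field k] [AddCommGroup V] [Module k V]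
    [FiniteDimensional k V] [AddCommGroup S] [Module k S] [FiniteDimensional k S]
    (n : ℕ)
    (g : LinearMap.BilinForm k V) (Q : QuadraticForm k V)
    (h2 : (2 : k) ≠ 0)
    (hsymm : ∀ v w, g v w = g w v)
    (hdimV : Module.finrank k V = 2 * n)
    (hQ : ∀ v, Q v = g v v)
    -- a polarisation with dual bases
    (iB eB : Fin n → V)
    (hii : ∀ a b, g (iB a) (iB b) = 0)
    (hee : ∀ a b, g (eB a) (eB b) = 0)
    (hei : ∀ a b, g (eB a) (iB b) = if a = b then (2 : k)⁻¹ else 0)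
    (hspan : Submodule.span k (Set.range iB ∪ Set.range eB) = ⊤)
    -- the spinor representation
    (hdimS : Module.finrank k S = 2 ^ n)
    (ρ : CliffordAlgebra Q ≃ₐ[k] Module.End k S)
    -- a pure spinor annihilated by `I`
    (v0 : S) (hv0ne : v0 ≠ 0)
    (hv0 : ∀ a, ρ (ι Q (iB a)) v0 = 0)
    -- a nonzero spinor norm
    (B : S →ₗ[k] S →ₗ[k] k) (hBne : B ≠ 0)
    (hB : ∀ (v : V) (φ ψ : S), B (ρ (ι Q v) φ) ψ = B φ (ρ (ι Q v) ψ)) :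
    -- the operator `L̃₂` in isotropic coordinates
    letI L : S → S → CliffordAlgebra Q := fun ψ1 ψ2 =>
      (∑ p ∈ Finset.univ.filter (fun p : Fin n × Fin n => p.1 ≠ p.2),
        (B (ρ (ι Q (eB p.1) * ι Q (eB p.2)) ψ1) ψ2) • (ι Q (iB p.1) * ι Q (iB p.2)))
      + (∑ p ∈ Finset.univ.filter (fun p : Fin n × Fin n => p.1 ≠ p.2),
        (B (ρ (ι Q (iB p.1) * ι Q (iB p.2)) ψ1) ψ2) • (ι Q (eB p.1) * ι Q (eB p.2)))
      + (∑ p ∈ Finset.univ.filter (fun p : Fin n × Fin n => p.1 ≠ p.2),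
        (B (ρ (ι Q (eB p.1) * ι Q (iB p.2)) ψ1) ψ2) •
          (ι Q (iB p.1) * ι Q (eB p.2) - ι Q (eB p.2) * ι Q (iB p.1)))
      + (2 : k)⁻¹ • ∑ a : Fin n,
        (B (ρ (ι Q (eB a) * ι Q (iB a) - ι Q (iB a) * ι Q (eB a)) ψ1) ψ2) •
          (ι Q (iB a) * ι Q (eB a) - ι Q (eB a) * ι Q (iB a))
    ∀ I J K : Finset (Fin n), Disjoint I J → K = (I ∪ J)ᶜ →
      (I.card + J.card + K.card = n) ∧
      (K.card ≠ 0 → K.card ≠ 2 →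
        ρ (L (ρ (prodE Q eB I) v0) (ρ (prodE Q eB J) v0)) (ρ (prodE Q eB K) v0) = 0) ∧
      (K = ∅ →
        ρ (L (ρ (prodE Q eB I) v0) (ρ (prodE Q eB J) v0)) (ρ (prodE Q eB K) v0) =
          (B (ρ (prodE Q eB I) v0) (ρ (prodE Q eB J) v0) *
            ((I.card : k) - (n : k) / 2)) • v0) ∧
      (∀ a b : Fin n, a ≠ b → K = {a, b} →
        ρ (L (ρ (prodE Q eB I) v0) (ρ (prodE Q eB J) v0))
            (ρ (ι Q (eB b) * ι Q (eB a)) v0) =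
          (2 * B (ρ (ι Q (eB a) * ι Q (eB b) * prodE Q eB I) v0)
            (ρ (prodE Q eB J) v0)) • v0) :=
  stmt16_general n g Q h2 hsymm hQ iB eB hii hee hei ρ v0 hv0 B hB
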